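/- arXiv:2311.10532 — 3 statements merged into one kernel-verified Lean document; each statement's English description precedes it below -/
import Mathlib

section
/- Let ψ : E → ℝ ∪ {−∞} be a positively homogeneous, concave, upper semicontinuous function on a finite-dimensional real vector space E, and let Ω = {φ ∈ E* : φ(x) ≥ ψ(x) for all x ∈ E} be the associated nonempty closed convex subset of the dual space E*. Then the dual cone of C_ψ equals C_Ω, i.e. (C_ψ)* = {φ ∈ E* : φ + Ω ⊆ Ω}. -/
/-!
If `φ ≥ 0` wherever `ψ > ⊥`, then `ψ ≤ θ ≤ φ + θ` there for every `θ ∈ Ω`. Conversely, if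
`φ + Ω ⊆ Ω`, iterating from one `θ ∈ Ω` gives `ψ x ≤ θ x + n φ x` for every `n`, which forces
`φ x ≥ 0` wherever `ψ x` is finite. As `{x | 0 ≤ φ x}` is closed, nonnegativity on the domain
of `ψ` is the same as nonnegativity on its closure `C_ψ`.
-/

open scoped Topology

noncomputable section

namespace DirectionalCounting

variable {E : Type*} [NormedAddCommGroup E] [NormedSpace ℝ E]

/-- The case `t = 0` gives `ψ 0 = 0`, as `0 * ⊥ = 0` in `EReal`. -/
def PosHomog (ψ : E → EReal) : Prop :=
  ∀ t : ℝ, 0 ≤ t → ∀ x : E, ψ (t • x) = (t : EReal) * ψ x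

def ConcaveE (ψ : E → EReal) : Prop :=
  ∀ x y : E, ∀ t : ℝ, 0 ≤ t → t ≤ 1 →
    (t : EReal) * ψ x + ((1 - t : ℝ) : EReal) * ψ y ≤ ψ (t • x + (1 - t) • y)

/-- The set `Ω ⊆ E*` of the paper. -/
def OmegaSet (ψ : E → EReal) : Set (E →L[ℝ] ℝ) :=
  {φ | ∀ x : E, ψ x ≤ ((φ x : ℝ) : EReal)}

/-- The cone `C_ψ` of the paper. -/
def Cpsi (ψ : E → EReal) : Set E := closure {x : E | ψ x ≠ ⊥}

lemma nsmul_add_mem_of_forall_add_mem {M : Type*} [AddMonoid M] {S : Set M} {a b : M}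
    (h : ∀ c ∈ S, a + c ∈ S) (hb : b ∈ S) (n : ℕ) : n • a + b ∈ S := by
  induction n with
  | zero => simpa using hb
  | succ n ih => simpa only [succ_nsmul', add_assoc] using h _ ih

lemma nonneg_of_forall_le_natCast_mul_add {a b r : ℝ} (h : ∀ n : ℕ, r ≤ n * b + a) : 0 ≤ b := by
  by_contra! hb
  obtain ⟨n, hn⟩ := exists_nat_gt ((a - r) / -b)
  rw [div_lt_iff₀ (neg_pos.mpr hb)] at hn
  linarith [h n]

lemma forall_mem_Cpsi_nonneg_iff {ψ : E → EReal} {φ : E →L[ℝ] ℝ} :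
    (∀ x ∈ Cpsi ψ, 0 ≤ φ x) ↔ ∀ x, ψ x ≠ ⊥ → 0 ≤ φ x :=
  ⟨fun h x hx ↦ h x (subset_closure hx),
    fun h _ hx ↦ closure_minimal h (isClosed_le continuous_const φ.continuous) hx⟩

lemma add_mem_OmegaSet {ψ : E → EReal} {φ θ : E →L[ℝ] ℝ} (hφ : ∀ x, ψ x ≠ ⊥ → 0 ≤ φ x)
    (hθ : θ ∈ OmegaSet ψ) : φ + θ ∈ OmegaSet ψ := by
  intro x
  by_cases hx : ψ x = ⊥
  · simp [hx]
  · refine (hθ x).trans (EReal.coe_le_coe_iff.mpr ?_)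
    simpa using hφ x hx

lemma nonneg_of_forall_nsmul_add_mem_OmegaSet {ψ : E → EReal} {φ θ : E →L[ℝ] ℝ}
    (h : ∀ n : ℕ, n • φ + θ ∈ OmegaSet ψ) {x : E} (hx : ψ x ≠ ⊥) : 0 ≤ φ x := by
  have hfin : ψ x ≠ ⊤ := ((by simpa using h 0 x : ψ x ≤ θ x).trans_lt (EReal.coe_lt_top _)).ne
  lift ψ x to ℝ using ⟨hfin, hx⟩ with r hr
  refine nonneg_of_forall_le_natCast_mul_add (r := r) (a := θ x) fun n ↦ ?_
  have hn := h n x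
  simp only [← hr, add_apply, smul_apply, nsmul_eq_mul] at hn
  exact_mod_cast hn

theorem dualCone_Cpsi_eq_translationCone_general
    (ψ : E → EReal) (hne : (OmegaSet ψ).Nonempty) :
    {φ : E →L[ℝ] ℝ | ∀ x ∈ Cpsi ψ, 0 ≤ φ x} =
      {φ : E →L[ℝ] ℝ | ∀ θ ∈ OmegaSet ψ, φ + θ ∈ OmegaSet ψ} := by
  ext φ
  simp only [Set.mem_ofPred_eq, forall_mem_Cpsi_nonneg_iff]
  refine ⟨fun hφ θ hθ ↦ add_mem_OmegaSet hφ hθ, fun hφ x hx ↦ ?_⟩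
  obtain ⟨θ, hθ⟩ := hne
  exact nonneg_of_forall_nsmul_add_mem_OmegaSet (nsmul_add_mem_of_forall_add_mem hφ hθ) hx

theorem dualCone_Cpsi_eq_translationCone
    [FiniteDimensional ℝ E]
    (ψ : E → EReal) (hhom : PosHomog ψ) (hconc : ConcaveE ψ)
    (husc : UpperSemicontinuous ψ) (hne : (OmegaSet ψ).Nonempty) :
    {φ : E →L[ℝ] ℝ | ∀ x ∈ Cpsi ψ, 0 ≤ φ x} =
      {φ : E →L[ℝ] ℝ | ∀ θ ∈ OmegaSet ψ, φ + θ ∈ OmegaSet ψ} :=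
  dualCone_Cpsi_eq_translationCone_general ψ hne

end DirectionalCounting
end
end

section
/- Let ψ : E → ℝ ∪ {−∞} be a positively homogeneous, concave, upper semicontinuous function on a finite-dimensional real vector space E, and let Ω = {φ ∈ E* : φ(x) ≥ ψ(x) for all x ∈ E}. Then the following are equivalent: (i) Ω has non-empty interior in E*; (ii) ψ(x) + ψ(−x) < 0 for every x ≠ 0 in E. Moreover, if these conditions hold, then the interior of Ω equals {φ ∈ E* : φ(x) > ψ(x) for all x ∈ E ∖ {0}}. -/
/-!
A point `φ` of `Ω` is interior iff it dominates `ψ` with a uniform margin,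
`ψ x ≤ φ x - δ‖x‖` for some `δ > 0`: test `φ` against the perturbations `φ - δ g` by norming
functionals `g` for one direction, and use the operator norm for the other. A margin forces
`ψ x + ψ (-x) < φ x + φ (-x) = 0` and `ψ < φ` off `0`. Conversely, if `ψ < φ` off `0`, upper
semicontinuity and compactness of the unit sphere give a margin on the sphere, and homogeneity
spreads it to all of `E`.

For (ii) → (i), the hypograph `{(x, r) | r ≤ ψ x}` is a closed convex cone in `E × ℝ`, and (ii)
makes it salient. Separating each `-k` (`k` a unit vector of the cone) from the cone and summing
over a finite subcover of the compact section gives a functional `L` positive on the nonzero points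
of the cone. As `(0, -1)` lies in the cone, `L (0, 1) < 0`, and `φ x = L (x, 0) / (-L (0, 1))`
dominates `ψ` strictly off `0`.
-/

open scoped Topology
open Filter Metric Set

noncomputable section

section Semicontinuity

variable {X : Type*} [TopologicalSpace X] {f : X → EReal} {g : X → ℝ}

theorem isOpen_setOf_lt_of_upperSemicontinuous (hf : UpperSemicontinuous f)
    (hg : Continuous g) : IsOpen {x | f x < g x} := by
  refine isOpen_iff_mem_nhds.2 fun x hx => ?_
  obtain ⟨c, hfc, hcg⟩ := EReal.exists_between_coe_real hx
  filter_upwards [hf x c hfc,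
    hg.continuousAt.eventually (lt_mem_nhds (EReal.coe_lt_coe_iff.1 hcg))] with y hfy hcy
  exact hfy.trans (EReal.coe_lt_coe_iff.2 hcy)

theorem IsCompact.exists_pos_forall_le_sub_of_lt {K : Set X} (hK : IsCompact K)
    (hf : UpperSemicontinuous f) (hg : Continuous g) (hlt : ∀ x ∈ K, f x < g x) :
    ∃ ε > 0, ∀ x ∈ K, f x ≤ ((g x - ε : ℝ) : EReal) := by
  set U : ℕ → Set X := fun n => {x | f x < ((g x - 1 / (n + 1) : ℝ) : EReal)}
  have hU_open (n : ℕ) : IsOpen (U n) :=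
    isOpen_setOf_lt_of_upperSemicontinuous hf (hg.sub continuous_const)
  have hU_mono : Monotone U := fun m n hmn x hx =>
    hx.trans_le (EReal.coe_le_coe_iff.2 (by gcongr))
  have hK_cover : K ⊆ ⋃ n, U n := fun x hx => by
    obtain ⟨c, hfc, hcg⟩ := EReal.exists_between_coe_real (hlt x hx)
    obtain ⟨n, hn⟩ := exists_nat_one_div_lt (sub_pos.2 (EReal.coe_lt_coe_iff.1 hcg))
    exact mem_iUnion.2 ⟨n, hfc.trans (EReal.coe_lt_coe_iff.2 (by linarith))⟩
  obtain ⟨n, hn⟩ := hK.elim_directed_cover U hU_open hK_cover hU_mono.directed_le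
  exact ⟨1 / (n + 1), Nat.one_div_pos_of_nat, fun x hx => (hn hx).le⟩

end Semicontinuity

theorem ProperCone.exists_forall_pos_of_salient {F : Type*} [NormedAddCommGroup F]
    [NormedSpace ℝ F] [FiniteDimensional ℝ F] (C : ProperCone ℝ F)
    (hC : ∀ x ∈ C, -x ∈ C → x = 0) : ∃ f : StrongDual ℝ F, ∀ x ∈ C, x ≠ 0 → 0 < f x := by
  set K := (C : Set F) ∩ sphere 0 1
  have hsep : ∀ k ∈ K, ∃ f : StrongDual ℝ F, (∀ y ∈ C, 0 ≤ f y) ∧ 0 < f k := by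
    rintro k ⟨hkC, hk⟩
    have hk0 : k ≠ 0 := ne_zero_of_mem_sphere one_ne_zero ⟨k, hk⟩
    obtain ⟨f, hfC, hfk⟩ := C.hyperplane_separation_point fun h => hk0 (hC k hkC h)
    exact ⟨f, hfC, by simpa using hfk⟩
  choose! f hf_nonneg hf_pos using hsep
  obtain ⟨t, htK, hcover⟩ :=
    ((isCompact_sphere (0 : F) 1).inter_left C.isClosed).elim_nhds_subcover
      (fun k => {y | 0 < f k y}) fun k hk =>
        (isOpen_lt continuous_const (f k).continuous).mem_nhds (hf_pos k hk)
  refine ⟨∑ k ∈ t, f k, fun x hxC hx0 => ?_⟩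
  have hnx : ‖x‖ ≠ 0 := norm_ne_zero_iff.2 hx0
  have hxK : ‖x‖⁻¹ • x ∈ K :=
    ⟨C.smul_mem hxC (inv_nonneg.2 (norm_nonneg x)), by simp [norm_smul, hnx]⟩
  obtain ⟨k, hkt, hk⟩ := mem_iUnion₂.1 (hcover hxK)
  have hsum : 0 < (∑ k ∈ t, f k) (‖x‖⁻¹ • x) := by
    rw [sum_apply]
    exact Finset.sum_pos' (fun j hj => hf_nonneg j (htK j hj) _ hxK.1) ⟨k, hkt, hk⟩
  rw [map_smul, smul_eq_mul] at hsum
  exact pos_of_mul_pos_right hsum (inv_nonneg.2 (norm_nonneg x))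

namespace DirectionalCounting

variable {E : Type*} [NormedAddCommGroup E] [NormedSpace ℝ E]

namespace PosHomog

variable {ψ : E → EReal}

theorem map_zero (hhom : PosHomog ψ) : ψ 0 = 0 := by
  simpa using hhom 0 le_rfl 0

theorem ne_top (hhom : PosHomog ψ) (husc : UpperSemicontinuousAt ψ 0) (x : E) : ψ x ≠ ⊤ := by
  intro hx
  have hsmul : Tendsto (fun t : ℝ => t • x) (𝓝[>] 0) (𝓝 0) := by
    refine Tendsto.mono_left ?_ nhdsWithin_le_nhds
    exact (continuous_id.smul continuous_const : Continuous fun t : ℝ => t • x).tendsto' 0 0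
      (zero_smul ℝ x)
  obtain ⟨t, hψt, ht⟩ := ((hsmul.eventually (husc 1 (by simp [hhom.map_zero]))).and
    self_mem_nhdsWithin).exists
  rw [hhom t ht.le, hx, EReal.coe_mul_top_of_pos ht] at hψt
  exact not_top_lt hψt

theorem superadditive (hhom : PosHomog ψ) (hconc : ConcaveE ψ) (x y : E) :
    ψ x + ψ y ≤ ψ (x + y) := by
  have hxy : x + y = (2 : ℝ) • ((1 / 2 : ℝ) • x + (1 - 1 / 2 : ℝ) • y) := by
    rw [smul_add, smul_smul, smul_smul]; norm_num
  calc ψ x + ψ y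
      = ((2 : ℝ) : EReal) * (((1 / 2 : ℝ) : EReal) * ψ x + ((1 - 1 / 2 : ℝ) : EReal) * ψ y) := by
        rw [EReal.left_distrib_of_nonneg_of_ne_top (by norm_num) (EReal.coe_ne_top 2),
          ← mul_assoc, ← mul_assoc, ← EReal.coe_mul, ← EReal.coe_mul]
        norm_num
    _ ≤ ((2 : ℝ) : EReal) * ψ ((1 / 2 : ℝ) • x + (1 - 1 / 2 : ℝ) • y) :=
        mul_le_mul_of_nonneg_left (hconc x y _ (by norm_num) (by norm_num)) (by norm_num)
    _ = ψ (x + y) := by rw [hxy, hhom 2 zero_le_two]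

theorem le_of_forall_mem_sphere (hhom : PosHomog ψ) {φ : E →L[ℝ] ℝ} {δ : ℝ}
    (h : ∀ y ∈ sphere (0 : E) 1, ψ y ≤ ((φ y - δ : ℝ) : EReal)) (x : E) :
    ψ x ≤ ((φ x - δ * ‖x‖ : ℝ) : EReal) := by
  rcases eq_or_ne x 0 with rfl | hx
  · simp [hhom.map_zero]
  have hnx : ‖x‖ ≠ 0 := norm_ne_zero_iff.2 hx
  have hy : ‖x‖⁻¹ • x ∈ sphere (0 : E) 1 := by simp [norm_smul, hnx]
  calc ψ x = ((‖x‖ : ℝ) : EReal) * ψ (‖x‖⁻¹ • x) := by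
        rw [← hhom _ (norm_nonneg x), smul_inv_smul₀ hnx]
    _ ≤ ((‖x‖ : ℝ) : EReal) * ((φ (‖x‖⁻¹ • x) - δ : ℝ) : EReal) :=
        mul_le_mul_of_nonneg_left (h _ hy) (by exact_mod_cast norm_nonneg x)
    _ = ((φ x - δ * ‖x‖ : ℝ) : EReal) := by
        rw [← EReal.coe_mul, map_smul, smul_eq_mul]
        congr 1
        field_simp

end PosHomog

variable {ψ : E → EReal} {φ : E →L[ℝ] ℝ}

theorem mem_interior_OmegaSet_iff :
    φ ∈ interior (OmegaSet ψ) ↔ ∃ δ > 0, ∀ x, ψ x ≤ ((φ x - δ * ‖x‖ : ℝ) : EReal) := by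
  rw [mem_interior_iff_mem_nhds, Metric.mem_nhds_iff]
  constructor
  · rintro ⟨ε, hε, hball⟩
    refine ⟨ε / 2, half_pos hε, fun x => ?_⟩
    obtain ⟨g, hg, hgx⟩ := exists_dual_vector'' ℝ x
    have hmem : φ - (ε / 2) • g ∈ ball φ ε := by
      rw [mem_ball, dist_eq_norm, sub_sub_cancel_left, norm_neg, norm_smul,
        Real.norm_of_nonneg (half_pos hε).le]
      nlinarith [norm_nonneg g]
    simpa [hgx, mul_comm] using hball hmem x
  · rintro ⟨δ, hδ, hψ⟩
    refine ⟨δ, hδ, fun φ' hφ' x => (hψ x).trans (EReal.coe_le_coe_iff.2 ?_)⟩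
    rw [mem_ball, dist_eq_norm] at hφ'
    have h := (φ' - φ).le_opNorm x
    rw [Real.norm_eq_abs, sub_apply] at h
    nlinarith [neg_abs_le (φ' x - φ x), norm_nonneg x]

theorem lt_of_mem_interior_OmegaSet (hφ : φ ∈ interior (OmegaSet ψ)) {x : E} (hx : x ≠ 0) :
    ψ x < φ x := by
  obtain ⟨δ, hδ, hψ⟩ := mem_interior_OmegaSet_iff.1 hφ
  refine (hψ x).trans_lt (EReal.coe_lt_coe_iff.2 ?_)
  nlinarith [norm_pos_iff.2 hx]

theorem add_neg_lt_zero_of_mem_interior_OmegaSet (hφ : φ ∈ interior (OmegaSet ψ)) {x : E}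
    (hx : x ≠ 0) : ψ x + ψ (-x) < 0 := by
  calc ψ x + ψ (-x) < (φ x : EReal) + (φ (-x) : EReal) :=
        EReal.add_lt_add (lt_of_mem_interior_OmegaSet hφ hx)
          (lt_of_mem_interior_OmegaSet hφ (neg_ne_zero.2 hx))
    _ = 0 := by rw [← EReal.coe_add, map_neg, add_neg_cancel, EReal.coe_zero]

theorem mem_interior_OmegaSet_of_forall_lt [FiniteDimensional ℝ E] (hhom : PosHomog ψ)
    (husc : UpperSemicontinuous ψ) (hφ : ∀ x, x ≠ 0 → ψ x < φ x) :
    φ ∈ interior (OmegaSet ψ) := by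
  obtain ⟨ε, hε, hsphere⟩ := (isCompact_sphere (0 : E) 1).exists_pos_forall_le_sub_of_lt husc
    φ.continuous fun y hy => hφ y (ne_zero_of_mem_sphere one_ne_zero ⟨y, hy⟩)
  exact mem_interior_OmegaSet_iff.2 ⟨ε, hε, hhom.le_of_forall_mem_sphere hsphere⟩

def hypographCone (ψ : E → EReal) (hhom : PosHomog ψ) (hconc : ConcaveE ψ)
    (husc : UpperSemicontinuous ψ) : ProperCone ℝ (E × ℝ) where
  carrier := {z | (z.2 : EReal) ≤ ψ z.1}
  add_mem' {z w} hz hw := by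
    simpa using (add_le_add hz hw).trans (hhom.superadditive hconc z.1 w.1)
  zero_mem' := by simp [hhom.map_zero]
  smul_mem' c z hz := by
    change ((c * z.2 : ℝ) : EReal) ≤ ψ ((c : ℝ) • z.1)
    rw [EReal.coe_mul, hhom c c.2]
    exact mul_le_mul_of_nonneg_left hz (by exact_mod_cast c.2)
  isClosed' := by
    simpa [← isOpen_compl_iff, compl_ofPred] using
      isOpen_setOf_lt_of_upperSemicontinuous (husc.comp continuous_fst) continuous_snd

theorem hypographCone_salient (hhom : PosHomog ψ) (hconc : ConcaveE ψ)
    (husc : UpperSemicontinuous ψ) (h : ∀ x, x ≠ 0 → ψ x + ψ (-x) < 0) :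
    ∀ z ∈ hypographCone ψ hhom hconc husc, -z ∈ hypographCone ψ hhom hconc husc → z = 0 := by
  rintro ⟨x, r⟩ (hz : (r : EReal) ≤ ψ x) (hnz : ((-r : ℝ) : EReal) ≤ ψ (-x))
  rcases eq_or_ne x 0 with rfl | hx
  · simp only [neg_zero, hhom.map_zero, EReal.coe_nonpos] at hz hnz
    simp [le_antisymm hz (by linarith)]
  · refine absurd (h x hx) (not_lt.2 ?_)
    have hsum := add_le_add hz hnz
    rwa [← EReal.coe_add, add_neg_cancel, EReal.coe_zero] at hsum

theorem exists_forall_lt_of_add_neg_lt_zero [FiniteDimensional ℝ E] (hhom : PosHomog ψ)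
    (hconc : ConcaveE ψ) (husc : UpperSemicontinuous ψ)
    (h : ∀ x, x ≠ 0 → ψ x + ψ (-x) < 0) : ∃ φ : E →L[ℝ] ℝ, ∀ x, x ≠ 0 → ψ x < φ x := by
  obtain ⟨L, hL⟩ := (hypographCone ψ hhom hconc husc).exists_forall_pos_of_salient
    (hypographCone_salient hhom hconc husc h)
  set a := -L (0, 1)
  have ha : 0 < a := by
    have := hL (0, -1) (by change ((-1 : ℝ) : EReal) ≤ ψ 0; simp [hhom.map_zero]) (by simp)
    simpa [a, ← map_neg] using this
  refine ⟨a⁻¹ • L.comp (ContinuousLinearMap.inl ℝ E ℝ), fun x hx => ?_⟩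
  have hlt : ∀ r : ℝ, (r : EReal) ≤ ψ x → r < a⁻¹ * L (x, 0) := by
    intro r hr
    have hpos := hL (x, r) hr (by simp [hx])
    have hsplit : ((x, r) : E × ℝ) = (x, 0) + r • (0, 1) := by simp
    rw [hsplit, map_add, map_smul, smul_eq_mul] at hpos
    rw [lt_inv_mul_iff₀ ha]
    linarith
  change ψ x < ((a⁻¹ * L (x, 0) : ℝ) : EReal)
  induction hψx : ψ x using EReal.rec with
  | bot => exact EReal.bot_lt_coe _
  | coe r => exact EReal.coe_lt_coe_iff.2 (hlt r hψx.ge)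
  | top => exact absurd hψx (hhom.ne_top (husc 0) x)

theorem interior_OmegaSet
    [FiniteDimensional ℝ E]
    (ψ : E → EReal) (hhom : PosHomog ψ) (hconc : ConcaveE ψ)
    (husc : UpperSemicontinuous ψ) :
    ((interior (OmegaSet ψ)).Nonempty ↔ ∀ x : E, x ≠ 0 → ψ x + ψ (-x) < 0) ∧
    ((∀ x : E, x ≠ 0 → ψ x + ψ (-x) < 0) →
      interior (OmegaSet ψ) =
        {φ : E →L[ℝ] ℝ | ∀ x : E, x ≠ 0 → ψ x < ((φ x : ℝ) : EReal)}) := by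
  refine ⟨⟨fun ⟨φ, hφ⟩ x hx => add_neg_lt_zero_of_mem_interior_OmegaSet hφ hx, fun h => ?_⟩,
    fun _ => ?_⟩
  · obtain ⟨φ, hφ⟩ := exists_forall_lt_of_add_neg_lt_zero hhom hconc husc h
    exact ⟨φ, mem_interior_OmegaSet_of_forall_lt hhom husc hφ⟩
  · exact Subset.antisymm (fun φ hφ x hx => lt_of_mem_interior_OmegaSet hφ hx)
      fun φ hφ => mem_interior_OmegaSet_of_forall_lt hhom husc hφ

end DirectionalCounting
end
end

section
/- Let E be a finite-dimensional real normed vector space, F a linear subspace of E, and π : E → E/F the quotient map. Let μ be a Radon measure on E with subexponential divergence such that ψ_μ(x) = −∞ for every x ≠ 0 in F. Then the pushforward measure ν = π_*μ on E/F is finite on compact sets and has subexponential divergence, and for every y ∈ E/F one has ψ_ν(y) = sup{ψ_μ(x) : x ∈ E, π(x) = y}. -/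
/-!
Since `ψ_μ = -∞` on `F ∖ {0}`, compactness of the unit sphere of `F` yields an open cone
containing `F ∖ {0}` of finite `μ`-measure; off a cone `{‖π z‖ < δ ‖z‖}` inside it the quotient
norm is comparable to the norm, so `∫ exp (-s ‖π z‖) dμ < ∞` for some `s`, which is the
subexponential divergence of `ν = π_* μ`.

Pulling back an open cone `D ∋ y` on which `exp (-s ‖w‖)` is `ν`-integrable gives the open cone
`π⁻¹ D ∋ x`, so `ψ_μ(x) ≤ ψ_ν(π x)`. Conversely, if `sup ψ_μ(π⁻¹ y) < ‖y‖ s`, then every unit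
vector `u` with `π u` on the closed ray through `y` (this includes the unit vectors of `F`) lies
in an open cone on which `exp (-s ‖π z‖)` is `μ`-integrable. Finitely many of these cones cover
those directions, and a thin enough cone around `y` in `E/F` pulls back into their union, so
`ψ_ν(y) ≤ ‖y‖ s`.
-/

open MeasureTheory Filter
open scoped Topology Classical

noncomputable section

namespace DirectionalCounting

variable {E : Type*} [SeminormedAddCommGroup E] [NormedSpace ℝ E]

/-- An open cone in `E`. -/
def IsOpenCone (C : Set E) : Prop :=
  IsOpen C ∧ ∀ x ∈ C, ∀ t : ℝ, 0 < t → t • x ∈ C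

variable [MeasurableSpace E]

/-- The exponent of growth `τ_C` of the restriction of `μ` to `C`:
the infimum of all `s` with `∫_C exp(−s‖x‖) dμ(x) < ∞`, as an extended real. -/
def coneExponent (μ : Measure E) (C : Set E) : EReal :=
  sInf ((fun s : ℝ => (s : EReal)) ''
    {s : ℝ | ∫⁻ x in C, ENNReal.ofReal (Real.exp (-s * ‖x‖)) ∂μ < ⊤})

/-- The indicator of growth `ψ_μ` of the measure `μ`. -/
def growthIndicator (μ : Measure E) (x : E) : EReal :=
  if x = 0 then 0
  else (‖x‖ : EReal) * sInf (coneExponent μ '' {C : Set E | IsOpenCone C ∧ x ∈ C})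

/-- `μ` has subexponential divergence. -/
def SubexpDiv (μ : Measure E) : Prop :=
  ∃ s : ℝ, ∫⁻ x, ENNReal.ofReal (Real.exp (-s * ‖x‖)) ∂μ < ⊤

section Cone

variable {E : Type*} [SeminormedAddCommGroup E] [NormedSpace ℝ E]

def IsPosHomogeneous (g : E → ℝ) : Prop :=
  ∀ c : ℝ, 0 < c → ∀ z, g (c • z) = c * g z

theorem IsPosHomogeneous.map_zero {g : E → ℝ} (hg : IsPosHomogeneous g) : g 0 = 0 := by
  have h := hg 2 two_pos 0
  rw [smul_zero] at h
  linarith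

theorem isPosHomogeneous_norm : IsPosHomogeneous (‖·‖ : E → ℝ) := fun _ hc _ =>
  norm_smul_of_nonneg hc.le _

theorem IsPosHomogeneous.const_mul {g : E → ℝ} (hg : IsPosHomogeneous g) (a : ℝ) :
    IsPosHomogeneous fun z => a * g z := fun c hc z => by
  simp only [hg c hc z, mul_left_comm]

theorem IsPosHomogeneous.comp_linearMap {E' : Type*} [SeminormedAddCommGroup E']
    [NormedSpace ℝ E'] {g : E' → ℝ} (hg : IsPosHomogeneous g) (L : E →ₗ[ℝ] E') :
    IsPosHomogeneous (g ∘ L) := fun c hc z => by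
  simp only [Function.comp_apply, map_smul, hg c hc]

theorem isPosHomogeneous_norm_smul_sub_norm_smul (r : ℝ) (y : E) :
    IsPosHomogeneous fun w : E => ‖r • w - ‖w‖ • y‖ := fun c hc w => by
  simp only [norm_smul_of_nonneg hc.le, smul_comm r c, mul_smul, ← smul_sub]

theorem isOpenCone_empty : IsOpenCone (∅ : Set E) :=
  ⟨isOpen_empty, fun _ hx => hx.elim⟩

theorem IsOpenCone.inter {C C' : Set E} (hC : IsOpenCone C) (hC' : IsOpenCone C') :
    IsOpenCone (C ∩ C') :=
  ⟨hC.1.inter hC'.1, fun x hx t ht => ⟨hC.2 x hx.1 t ht, hC'.2 x hx.2 t ht⟩⟩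

theorem IsOpenCone.union {C C' : Set E} (hC : IsOpenCone C) (hC' : IsOpenCone C') :
    IsOpenCone (C ∪ C') :=
  ⟨hC.1.union hC'.1, fun x hx t ht => hx.imp (hC.2 x · t ht) (hC'.2 x · t ht)⟩

theorem IsOpenCone.preimage {E' : Type*} [SeminormedAddCommGroup E'] [NormedSpace ℝ E']
    {C : Set E'} (hC : IsOpenCone C) {L : E →ₗ[ℝ] E'} (hL : Continuous L) :
    IsOpenCone (L ⁻¹' C) :=
  ⟨hC.1.preimage hL, fun x hx t ht => by
    simpa only [Set.mem_preimage, map_smul] using hC.2 _ hx t ht⟩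

theorem IsOpenCone.smul_mem_iff {C : Set E} (hC : IsOpenCone C) {c : ℝ} (hc : 0 < c) {x : E} :
    c • x ∈ C ↔ x ∈ C := by
  refine ⟨fun h => ?_, fun h => hC.2 x h c hc⟩
  simpa only [inv_smul_smul₀ hc.ne'] using hC.2 _ h c⁻¹ (inv_pos.2 hc)

theorem isOpenCone_setOf_lt {g h : E → ℝ} (hgc : Continuous g) (hhc : Continuous h)
    (hg : IsPosHomogeneous g) (hh : IsPosHomogeneous h) : IsOpenCone {z | g z < h z} :=
  ⟨isOpen_lt hgc hhc, fun z hz c hc => by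
    simpa only [Set.mem_ofPred_eq, hg c hc, hh c hc] using mul_lt_mul_of_pos_left hz hc⟩

end Cone

section Exponent

variable {E : Type*} [SeminormedAddCommGroup E] [MeasurableSpace E] {μ : Measure E}

theorem coneExponent_le {C : Set E} {t : ℝ}
    (h : ∫⁻ z in C, ENNReal.ofReal (Real.exp (-t * ‖z‖)) ∂μ < ⊤) : coneExponent μ C ≤ t :=
  sInf_le ⟨t, h, rfl⟩

variable [OpensMeasurableSpace E]

theorem setLIntegral_inter_setOf_lt_le {g h : E → ℝ}
    (hgc : Continuous g) (hhc : Continuous h) {C : Set E} (hC : IsOpen C) :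
    ∫⁻ z in C ∩ {z | g z < h z}, ENNReal.ofReal (Real.exp (-h z)) ∂μ ≤
      ∫⁻ z in C, ENNReal.ofReal (Real.exp (-g z)) ∂μ :=
  (setLIntegral_mono' (hC.inter (isOpen_lt hgc hhc)).measurableSet fun _ hz =>
    ENNReal.ofReal_le_ofReal (Real.exp_le_exp.2 (neg_le_neg hz.2.le))).trans
    (lintegral_mono_set Set.inter_subset_left)

theorem SubexpDiv.isFiniteMeasureOnCompacts (h : SubexpDiv μ) :
    IsFiniteMeasureOnCompacts μ := by
  obtain ⟨s, hs⟩ := h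
  refine ⟨fun K hK => ?_⟩
  obtain ⟨R, hR⟩ := hK.isBounded.subset_closedBall 0
  have hbound : ENNReal.ofReal (Real.exp (-(|s| * R))) * μ (Metric.closedBall 0 R) ≤
      ∫⁻ z, ENNReal.ofReal (Real.exp (-s * ‖z‖)) ∂μ := by
    rw [← setLIntegral_const]
    refine (setLIntegral_mono (by fun_prop) fun z hz => ?_).trans (setLIntegral_le_lintegral _ _)
    have hz : ‖z‖ ≤ R := mem_closedBall_zero_iff.1 hz
    refine ENNReal.ofReal_le_ofReal (Real.exp_le_exp.2 ?_)
    nlinarith [mul_le_mul_of_nonneg_left hz (abs_nonneg s),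
      mul_le_mul_of_nonneg_right (le_abs_self s) (norm_nonneg z)]
  exact (measure_mono hR).trans_lt (ENNReal.lt_top_of_mul_ne_top_right
    (hbound.trans_lt hs).ne (ENNReal.ofReal_pos.2 (Real.exp_pos _)).ne')

end Exponent

section GrowthIndicator

variable {E : Type*} [SeminormedAddCommGroup E] [NormedSpace ℝ E] [MeasurableSpace E]
  {μ : Measure E}

theorem growthIndicator_le_norm_mul_of_lintegral_lt_top {C : Set E} (hC : IsOpenCone C) {u : E}
    (hu : u ∈ C) {t : ℝ} (h : ∫⁻ z in C, ENNReal.ofReal (Real.exp (-t * ‖z‖)) ∂μ < ⊤) :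
    growthIndicator μ u ≤ ((‖u‖ * t : ℝ) : EReal) := by
  unfold growthIndicator
  split_ifs with hu0
  · simp [hu0]
  · rw [EReal.coe_mul]
    exact mul_le_mul_of_nonneg_left (sInf_le_of_le ⟨C, ⟨hC, hu⟩, rfl⟩ (coneExponent_le h))
      (EReal.coe_nonneg.2 (norm_nonneg u))

theorem exists_lintegral_lt_top_of_growthIndicator_lt {u : E} (hu : 0 < ‖u‖) {a : ℝ}
    (h : growthIndicator μ u < a) :
    ∃ C, IsOpenCone C ∧ u ∈ C ∧ ∃ t : ℝ, t * ‖u‖ < a ∧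
      ∫⁻ z in C, ENNReal.ofReal (Real.exp (-t * ‖z‖)) ∂μ < ⊤ := by
  have hu0 : u ≠ 0 := by rintro rfl; simp at hu
  rw [growthIndicator, if_neg hu0, mul_comm,
    ← EReal.lt_div_iff (EReal.coe_pos.2 hu) (EReal.coe_ne_top _), ← EReal.coe_div] at h
  obtain ⟨_, ⟨C, ⟨hC, huC⟩, rfl⟩, hC'⟩ := sInf_lt_iff.1 h
  obtain ⟨_, ⟨t, ht, rfl⟩, hlt⟩ := sInf_lt_iff.1 hC'
  exact ⟨C, hC, huC, t, (lt_div_iff₀ hu).1 (EReal.coe_lt_coe_iff.1 hlt), ht⟩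

theorem growthIndicator_smul (μ : Measure E) (x : E) {c : ℝ} (hc : 0 < c) :
    growthIndicator μ (c • x) = c * growthIndicator μ x := by
  unfold growthIndicator
  rcases eq_or_ne x 0 with rfl | hx
  · simp
  have hcones : {C : Set E | IsOpenCone C ∧ c • x ∈ C} = {C | IsOpenCone C ∧ x ∈ C} := by
    ext C
    exact and_congr_right fun hC => hC.smul_mem_iff hc
  rw [if_neg (smul_ne_zero hc.ne' hx), if_neg hx, hcones, norm_smul_of_nonneg hc.le,
    EReal.coe_mul, mul_assoc]

theorem exists_isOpenCone_superset_lintegral_lt_top (f : E → ENNReal) {K : Set E}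
    (hK : IsCompact K) (h : ∀ u ∈ K, ∃ C, IsOpenCone C ∧ u ∈ C ∧ ∫⁻ z in C, f z ∂μ < ⊤) :
    ∃ U, IsOpenCone U ∧ K ⊆ U ∧ ∫⁻ z in U, f z ∂μ < ⊤ := by
  refine hK.induction_on ⟨∅, isOpenCone_empty, subset_rfl, by simp⟩
    (fun s t hst ⟨U, hU, htU, hfin⟩ => ⟨U, hU, hst.trans htU, hfin⟩)
    (fun s t ⟨U, hU, hsU, hUfin⟩ ⟨V, hV, htV, hVfin⟩ =>
      ⟨U ∪ V, hU.union hV, Set.union_subset_union hsU htV,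
        (lintegral_union_le f U V).trans_lt (ENNReal.add_lt_top.2 ⟨hUfin, hVfin⟩)⟩)
    fun u hu => ?_
  obtain ⟨C, hC, huC, hfin⟩ := h u hu
  exact ⟨C, mem_nhdsWithin_of_mem_nhds (hC.1.mem_nhds huC), C, hC, subset_rfl, hfin⟩

variable [OpensMeasurableSpace E]

theorem growthIndicator_le_of_lintegral_exp_neg_lt_top {g : E → ℝ} (hgc : Continuous g)
    (hg : IsPosHomogeneous g) {C : Set E} (hC : IsOpenCone C) {u : E} (huC : u ∈ C)
    (hu : 0 < ‖u‖) (h : ∫⁻ z in C, ENNReal.ofReal (Real.exp (-g z)) ∂μ < ⊤) :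
    growthIndicator μ u ≤ g u := by
  refine EReal.le_of_forall_lt_iff_le.1 fun a ha => ?_
  set t := a / ‖u‖
  have htc : Continuous fun z : E => t * ‖z‖ := continuous_const.mul continuous_norm
  have hC' : IsOpenCone (C ∩ {z | g z < t * ‖z‖}) :=
    hC.inter (isOpenCone_setOf_lt hgc htc hg (isPosHomogeneous_norm.const_mul t))
  have huC' : u ∈ C ∩ {z | g z < t * ‖z‖} :=
    ⟨huC, show g u < t * ‖u‖ by rwa [div_mul_cancel₀ _ hu.ne', ← EReal.coe_lt_coe_iff]⟩
  have hfin : ∫⁻ z in C ∩ {z | g z < t * ‖z‖}, ENNReal.ofReal (Real.exp (-t * ‖z‖)) ∂μ < ⊤ := by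
    simpa only [neg_mul] using (setLIntegral_inter_setOf_lt_le hgc htc hC.1).trans_lt h
  simpa only [t, mul_div_cancel₀ _ hu.ne'] using
    growthIndicator_le_norm_mul_of_lintegral_lt_top hC' huC' hfin

theorem exists_lintegral_exp_neg_lt_top_of_growthIndicator_lt {g : E → ℝ} (hgc : Continuous g)
    (hg : IsPosHomogeneous g) {u : E} (hu : 0 < ‖u‖) (h : growthIndicator μ u < g u) :
    ∃ C, IsOpenCone C ∧ u ∈ C ∧ ∫⁻ z in C, ENNReal.ofReal (Real.exp (-g z)) ∂μ < ⊤ := by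
  obtain ⟨C, hC, huC, t, htu, hfin⟩ := exists_lintegral_lt_top_of_growthIndicator_lt hu h
  have htc : Continuous fun z : E => t * ‖z‖ := continuous_const.mul continuous_norm
  refine ⟨C ∩ {z | t * ‖z‖ < g z},
    hC.inter (isOpenCone_setOf_lt htc hgc (isPosHomogeneous_norm.const_mul t) hg), ⟨huC, htu⟩,
    (setLIntegral_inter_setOf_lt_le htc hgc hC.1).trans_lt ?_⟩
  simpa only [neg_mul] using hfin

end GrowthIndicator

section Proper

variable {E : Type*} [NormedAddCommGroup E] [NormedSpace ℝ E] [ProperSpace E]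

theorem exists_pos_setOf_lt_mul_norm_subset {g : E → ℝ} (hgc : Continuous g)
    (hg : IsPosHomogeneous g) {U : Set E} (hU : IsOpenCone U)
    (hpos : ∀ u ∈ Metric.sphere (0 : E) 1 \ U, 0 < g u) :
    ∃ η > 0, {z | g z < η * ‖z‖} ⊆ U := by
  obtain ⟨η, hη, hmin⟩ :=
    ((isCompact_sphere (0 : E) 1).diff hU.1).exists_forall_le' hgc.continuousOn hpos
  refine ⟨η, hη, fun z hz => ?_⟩
  have hz0 : 0 < ‖z‖ := norm_pos_iff.2 fun h => by simp [h, hg.map_zero] at hz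
  have hu : ‖z‖⁻¹ • z ∈ U := by
    by_contra hu
    have h := hmin _ ⟨by simp [norm_smul, hz0.ne'], hu⟩
    rw [hg _ (inv_pos.2 hz0), le_inv_mul_iff₀ hz0, mul_comm] at h
    exact (Set.mem_ofPred_eq ▸ hz).not_ge h
  simpa only [smul_inv_smul₀ hz0.ne'] using hU.2 _ hu ‖z‖ hz0

end Proper

section Quotient

variable {E : Type*} [NormedAddCommGroup E] [NormedSpace ℝ E] [FiniteDimensional ℝ E]
  (F : Submodule ℝ E)

theorem norm_quotient_pos {y : E ⧸ F} (hy : y ≠ 0) : 0 < ‖y‖ :=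
  haveI := F.closed_of_finiteDimensional
  norm_pos_iff.2 hy

theorem norm_quotient_eq_zero {y : E ⧸ F} : ‖y‖ = 0 ↔ y = 0 :=
  haveI := F.closed_of_finiteDimensional
  norm_eq_zero

variable [MeasurableSpace E] {μ : Measure E}

theorem growthIndicator_lt_mul_norm_mkQ
    (hF : ∀ x : E, x ∈ F → x ≠ 0 → growthIndicator μ x = ⊥) {y : E ⧸ F} (hy : y ≠ 0) {s : ℝ}
    (hs : sSup (growthIndicator μ '' {x | F.mkQ x = y}) < ((‖y‖ * s : ℝ) : EReal))
    {u : E} (hu : u ≠ 0) (hray : ‖y‖ • F.mkQ u = ‖F.mkQ u‖ • y) :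
    growthIndicator μ u < ((s * ‖F.mkQ u‖ : ℝ) : EReal) := by
  by_cases hπu : F.mkQ u = 0
  · rw [hF u ((Submodule.Quotient.mk_eq_zero F).1 hπu) hu]
    exact EReal.bot_lt_coe _
  have hc := norm_quotient_pos F hπu
  set l := ‖y‖ / ‖F.mkQ u‖ with hl_def
  have hl : 0 < l := div_pos (norm_quotient_pos F hy) hc
  have hx : F.mkQ (l • u) = y := by
    rw [map_smul, hl_def, div_eq_inv_mul, mul_smul, hray, smul_smul, inv_mul_cancel₀ hc.ne',
      one_smul]
  have hlt : (l : EReal) * growthIndicator μ u < l * ((s * ‖F.mkQ u‖ : ℝ) : EReal) := by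
    rw [← growthIndicator_smul μ u hl, ← EReal.coe_mul,
      show l * (s * ‖F.mkQ u‖) = ‖y‖ * s by rw [hl_def]; field_simp]
    exact (le_sSup (Set.mem_image_of_mem (growthIndicator μ) hx)).trans_lt hs
  exact lt_of_mul_lt_mul_left hlt (EReal.coe_nonneg.2 hl.le)

variable [OpensMeasurableSpace E]

theorem exists_pos_measure_setOf_norm_mkQ_lt_lt_top
    (hF : ∀ x : E, x ∈ F → x ≠ 0 → growthIndicator μ x = ⊥) :
    ∃ δ > 0, μ {z | ‖F.mkQ z‖ < δ * ‖z‖} < ⊤ := by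
  have hπ : Continuous F.mkQ := F.mkQ.continuous_of_finiteDimensional
  have hK : IsCompact ((F : Set E) ∩ Metric.sphere 0 1) :=
    (isCompact_sphere 0 1).inter_left F.closed_of_finiteDimensional
  obtain ⟨U, hU, hFU, hUfin⟩ := exists_isOpenCone_superset_lintegral_lt_top (μ := μ)
    (fun z => ENNReal.ofReal (Real.exp (-(0 * ‖z‖)))) hK fun u ⟨huF, hu⟩ => by
      have hu1 : ‖u‖ = 1 := mem_sphere_zero_iff_norm.1 hu
      refine exists_lintegral_exp_neg_lt_top_of_growthIndicator_lt
        (continuous_const.mul continuous_norm) (isPosHomogeneous_norm.const_mul 0)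
        (hu1 ▸ one_pos) ?_
      rw [hF u huF (norm_ne_zero_iff.1 (hu1 ▸ one_ne_zero))]
      exact EReal.bot_lt_coe _
  obtain ⟨δ, hδ, hsub⟩ := exists_pos_setOf_lt_mul_norm_subset hπ.norm
    (isPosHomogeneous_norm.comp_linearMap F.mkQ) hU fun u hu =>
      norm_quotient_pos F fun h => hu.2 (hFU ⟨(Submodule.Quotient.mk_eq_zero F).1 h, hu.1⟩)
  refine ⟨δ, hδ, (measure_mono hsub).trans_lt ?_⟩
  simpa using hUfin

theorem exists_lintegral_exp_neg_norm_mkQ_lt_top (hsubexp : SubexpDiv μ)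
    (hF : ∀ x : E, x ∈ F → x ≠ 0 → growthIndicator μ x = ⊥) :
    ∃ s : ℝ, ∫⁻ z, ENNReal.ofReal (Real.exp (-s * ‖F.mkQ z‖)) ∂μ < ⊤ := by
  obtain ⟨s, hs⟩ := hsubexp
  obtain ⟨δ, hδ, hfin⟩ := exists_pos_measure_setOf_norm_mkQ_lt_lt_top F hF
  set V := {z | ‖F.mkQ z‖ < δ * ‖z‖}
  have hπ : Continuous F.mkQ := F.mkQ.continuous_of_finiteDimensional
  have hV : MeasurableSet V :=
    (isOpen_lt hπ.norm (continuous_const.mul continuous_norm)).measurableSet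
  refine ⟨max s 0 / δ, ?_⟩
  calc ∫⁻ z, ENNReal.ofReal (Real.exp (-(max s 0 / δ) * ‖F.mkQ z‖)) ∂μ
      ≤ ∫⁻ z, V.indicator 1 z + ENNReal.ofReal (Real.exp (-s * ‖z‖)) ∂μ :=
        lintegral_mono fun z => ?_
    _ = μ V + ∫⁻ z, ENNReal.ofReal (Real.exp (-s * ‖z‖)) ∂μ := by
        rw [lintegral_add_left (measurable_one.indicator hV), lintegral_indicator_one hV]
    _ < ⊤ := ENNReal.add_lt_top.2 ⟨hfin, hs⟩
  by_cases hz : z ∈ V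
  · refine le_add_right ?_
    rw [Set.indicator_of_mem hz, Pi.one_apply, ENNReal.ofReal_le_one, Real.exp_le_one_iff,
      neg_mul, neg_nonpos]
    positivity
  · rw [Set.indicator_of_notMem hz, zero_add]
    refine ENNReal.ofReal_le_ofReal (Real.exp_le_exp.2 ?_)
    have hz : δ * ‖z‖ ≤ ‖F.mkQ z‖ := not_lt.1 hz
    calc -(max s 0 / δ) * ‖F.mkQ z‖ ≤ -(max s 0 / δ) * (δ * ‖z‖) :=
          mul_le_mul_of_nonpos_left hz (neg_nonpos.2 (by positivity))
      _ = -max s 0 * ‖z‖ := by field_simp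
      _ ≤ -s * ‖z‖ :=
          mul_le_mul_of_nonneg_right (neg_le_neg (le_max_left s 0)) (norm_nonneg z)

variable [MeasurableSpace (E ⧸ F)] [BorelSpace (E ⧸ F)]

theorem growthIndicator_map_mkQ_le_of_sSup_lt
    (hF : ∀ x : E, x ∈ F → x ≠ 0 → growthIndicator μ x = ⊥) {y : E ⧸ F} (hy : y ≠ 0) {s : ℝ}
    (hs : sSup (growthIndicator μ '' {x | F.mkQ x = y}) < ((‖y‖ * s : ℝ) : EReal)) :
    growthIndicator (μ.map F.mkQ) y ≤ ((‖y‖ * s : ℝ) : EReal) := by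
  have hπ : Continuous F.mkQ := F.mkQ.continuous_of_finiteDimensional
  -- `φ w = 0` iff `w` lies on the closed ray through `y`.
  set φ : E ⧸ F → ℝ := fun w => ‖‖y‖ • w - ‖w‖ • y‖
  have hφc : Continuous φ := by fun_prop
  have hφ : IsPosHomogeneous φ := isPosHomogeneous_norm_smul_sub_norm_smul ‖y‖ y
  have hA : IsCompact (Metric.sphere (0 : E) 1 ∩ {u | φ (F.mkQ u) = 0}) :=
    (isCompact_sphere 0 1).inter_right (isClosed_eq (hφc.comp hπ) continuous_const)
  obtain ⟨W, hW, hAW, hWfin⟩ := exists_isOpenCone_superset_lintegral_lt_top (μ := μ)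
    (fun z => ENNReal.ofReal (Real.exp (-(s * ‖F.mkQ z‖)))) hA fun u ⟨hu, hφu⟩ => by
      have hu1 : ‖u‖ = 1 := mem_sphere_zero_iff_norm.1 hu
      refine exists_lintegral_exp_neg_lt_top_of_growthIndicator_lt (continuous_const.mul hπ.norm)
        ((isPosHomogeneous_norm.comp_linearMap F.mkQ).const_mul s) (hu1 ▸ one_pos) ?_
      exact growthIndicator_lt_mul_norm_mkQ F hF hy hs (norm_ne_zero_iff.1 (hu1 ▸ one_ne_zero))
        (sub_eq_zero.1 ((norm_quotient_eq_zero F).1 hφu))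
  obtain ⟨η, hη, hηW⟩ := exists_pos_setOf_lt_mul_norm_subset (hφc.comp hπ)
    (hφ.comp_linearMap F.mkQ) hW fun u hu =>
      (norm_nonneg _).lt_of_ne' fun h => hu.2 (hAW ⟨hu.1, h⟩)
  set D := {w : E ⧸ F | φ w < η * ‖w‖}
  have hD : IsOpenCone D := isOpenCone_setOf_lt hφc (continuous_const.mul continuous_norm) hφ
    (isPosHomogeneous_norm.const_mul η)
  have hyD : y ∈ D := by
    simpa [D, φ] using mul_pos hη (norm_quotient_pos F hy)
  have hDW : F.mkQ ⁻¹' D ⊆ W := fun z hz => hηW <|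
    hz.trans_le (mul_le_mul_of_nonneg_left (Submodule.Quotient.norm_mk_le F z) hη.le)
  refine growthIndicator_le_norm_mul_of_lintegral_lt_top hD hyD ?_
  rw [setLIntegral_map hD.1.measurableSet (by fun_prop) hπ.measurable]
  exact (lintegral_mono_set hDW).trans_lt (by simpa only [neg_mul] using hWfin)

theorem growthIndicator_map_mkQ_le_sSup
    (hF : ∀ x : E, x ∈ F → x ≠ 0 → growthIndicator μ x = ⊥) (y : E ⧸ F) :
    growthIndicator (μ.map F.mkQ) y ≤ sSup (growthIndicator μ '' {x | F.mkQ x = y}) := by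
  rcases eq_or_ne y 0 with rfl | hy
  · exact le_sSup_of_le ⟨0, map_zero _, rfl⟩ (by simp [growthIndicator])
  have hy' := norm_quotient_pos F hy
  refine EReal.le_of_forall_lt_iff_le.1 fun a ha => ?_
  have h := growthIndicator_map_mkQ_le_of_sSup_lt F hF hy (s := a / ‖y‖)
    (by rwa [mul_div_cancel₀ _ hy'.ne'])
  rwa [mul_div_cancel₀ _ hy'.ne'] at h

theorem growthIndicator_le_growthIndicator_map_mkQ
    (hF : ∀ x : E, x ∈ F → x ≠ 0 → growthIndicator μ x = ⊥) (x : E) :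
    growthIndicator μ x ≤ growthIndicator (μ.map F.mkQ) (F.mkQ x) := by
  have hπ : Continuous F.mkQ := F.mkQ.continuous_of_finiteDimensional
  by_cases hπx : F.mkQ x = 0
  · rcases eq_or_ne x 0 with rfl | hx
    · simp [growthIndicator]
    · rw [hF x ((Submodule.Quotient.mk_eq_zero F).1 hπx) hx]
      exact bot_le
  have hx : 0 < ‖x‖ := norm_pos_iff.2 fun h => hπx (by rw [h, map_zero])
  refine EReal.le_of_forall_lt_iff_le.1 fun a ha => ?_
  obtain ⟨D, hD, hxD, t, hta, hfin⟩ :=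
    exists_lintegral_lt_top_of_growthIndicator_lt (norm_quotient_pos F hπx) ha
  rw [setLIntegral_map hD.1.measurableSet (by fun_prop) hπ.measurable] at hfin
  have hgc : Continuous fun z : E => t * ‖F.mkQ z‖ := continuous_const.mul hπ.norm
  refine (growthIndicator_le_of_lintegral_exp_neg_lt_top hgc
    ((isPosHomogeneous_norm.comp_linearMap F.mkQ).const_mul t) (hD.preimage hπ) hxD hx
    (by simpa only [neg_mul] using hfin)).trans ?_
  exact EReal.coe_le_coe_iff.2 hta.le

end Quotient

theorem growthIndicator_quotient_general
    {E : Type*} [NormedAddCommGroup E] [NormedSpace ℝ E] [FiniteDimensional ℝ E]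
    [MeasurableSpace E] [BorelSpace E]
    (F : Submodule ℝ E)
    [MeasurableSpace (E ⧸ F)] [BorelSpace (E ⧸ F)]
    (μ : Measure E)
    (hsubexp : SubexpDiv μ)
    (hF : ∀ x : E, x ∈ F → x ≠ 0 → growthIndicator μ x = ⊥) :
    (∀ K : Set (E ⧸ F), IsCompact K → Measure.map F.mkQ μ K < ⊤) ∧
    SubexpDiv (Measure.map F.mkQ μ) ∧
    ∀ y : E ⧸ F, growthIndicator (Measure.map F.mkQ μ) y =
      sSup (growthIndicator μ '' {x : E | F.mkQ x = y}) := by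
  obtain ⟨s, hs⟩ := exists_lintegral_exp_neg_norm_mkQ_lt_top F hsubexp hF
  have hν : SubexpDiv (μ.map F.mkQ) :=
    ⟨s, by rwa [lintegral_map (by fun_prop) F.mkQ.continuous_of_finiteDimensional.measurable]⟩
  refine ⟨fun K hK => hν.isFiniteMeasureOnCompacts.lt_top_of_isCompact hK, hν, fun y => ?_⟩
  refine le_antisymm (growthIndicator_map_mkQ_le_sSup F hF y) (sSup_le ?_)
  rintro _ ⟨x, rfl, rfl⟩
  exact growthIndicator_le_growthIndicator_map_mkQ F hF x

theorem growthIndicator_quotient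
    {E : Type*} [NormedAddCommGroup E] [NormedSpace ℝ E] [FiniteDimensional ℝ E]
    [MeasurableSpace E] [BorelSpace E]
    (F : Submodule ℝ E)
    [MeasurableSpace (E ⧸ F)] [BorelSpace (E ⧸ F)]
    (μ : Measure E) [IsFiniteMeasureOnCompacts μ]
    (hsubexp : SubexpDiv μ)
    (hF : ∀ x : E, x ∈ F → x ≠ 0 → growthIndicator μ x = ⊥) :
    (∀ K : Set (E ⧸ F), IsCompact K → Measure.map F.mkQ μ K < ⊤) ∧
    SubexpDiv (Measure.map F.mkQ μ) ∧
    ∀ y : E ⧸ F, growthIndicator (Measure.map F.mkQ μ) y =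
      sSup (growthIndicator μ '' {x : E | F.mkQ x = y}) :=
  growthIndicator_quotient_general F μ hsubexp hF

end DirectionalCounting
end
end
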